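/- arXiv:2111.14635 — 3 statements merged into one kernel-verified Lean document; each statement's English description precedes it below -/
import Mathlib

section
/- Let N ≥ 1, let q : Fin N → ℝ be a prior distribution with q_i > 0 for all i and Σ_i q_i = 1, let U : Fin N → ℝ and β ∈ ℝ. Define the Gibbs distribution g_i = q_i·exp(β·U_i) / Σ_j q_j·exp(β·U_j). Then for every distribution p : Fin N → ℝ with p_i > 0 for all i, Σ_i p_i = 1, and Σ_i p_i·U_i = Σ_i g_i·U_i, one has Σ_i p_i·ln(p_i/q_i) ≥ Σ_i g_i·ln(g_i/q_i), with equality if and only if p = g. -/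
/-!
Writing `g` for the Gibbs distribution and `Z` for the partition function,
`log (g i / q i) = β * U i - log Z` is affine in `U i`, so every `p` with the same total mass and
mean utility as `g` satisfies `∑ p log (g / q) = ∑ g log (g / q)`. This gives the Pythagorean identity
`KL(p ‖ q) = KL(p ‖ g) + KL(g ‖ q)`, and Gibbs' inequality `KL(p ‖ g) ≥ 0`, with equality only
at `p = g`, finishes the proof.
-/

open Real Finset InformationTheory

section KullbackLeibler

variable {ι : Type*} [Fintype ι]

noncomputable def klInfo (p q : ι → ℝ) : ℝ := ∑ i, p i * log (p i / q i)

lemma mul_log_div_eq_mul_klFun_add {p g : ℝ} (hg : 0 < g) :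
    p * log (p / g) = g * klFun (p / g) + (p - g) := by
  rw [klFun_apply]
  field_simp
  ring

lemma klInfo_eq_sum_mul_klFun {p g : ι → ℝ} (hg : ∀ i, 0 < g i) (hsum : ∑ i, p i = ∑ i, g i) :
    klInfo p g = ∑ i, g i * klFun (p i / g i) := by
  simp only [klInfo, fun i ↦ mul_log_div_eq_mul_klFun_add (p := p i) (hg i), sum_add_distrib,
    sum_sub_distrib, hsum, sub_self, add_zero]

lemma klInfo_nonneg {p g : ι → ℝ} (hp : ∀ i, 0 ≤ p i) (hg : ∀ i, 0 < g i)
    (hsum : ∑ i, p i = ∑ i, g i) : 0 ≤ klInfo p g := by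
  rw [klInfo_eq_sum_mul_klFun hg hsum]
  exact sum_nonneg fun i _ ↦ mul_nonneg (hg i).le (klFun_nonneg (div_nonneg (hp i) (hg i).le))

lemma klInfo_eq_zero_iff {p g : ι → ℝ} (hp : ∀ i, 0 ≤ p i) (hg : ∀ i, 0 < g i)
    (hsum : ∑ i, p i = ∑ i, g i) : klInfo p g = 0 ↔ p = g := by
  have hratio (i : ι) : 0 ≤ p i / g i := div_nonneg (hp i) (hg i).le
  rw [klInfo_eq_sum_mul_klFun hg hsum,
    sum_eq_zero_iff_of_nonneg fun i _ ↦ mul_nonneg (hg i).le (klFun_nonneg (hratio i)), funext_iff]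
  refine forall_congr' fun i ↦ ?_
  rw [mul_eq_zero_iff_left (hg i).ne', klFun_eq_zero_iff (hratio i), div_eq_one_iff_eq (hg i).ne']
  simp

lemma klInfo_eq_klInfo_add_klInfo {p g q : ι → ℝ} (hp : ∀ i, 0 < p i) (hg : ∀ i, 0 < g i)
    (hq : ∀ i, 0 < q i)
    (hcross : ∑ i, p i * log (g i / q i) = ∑ i, g i * log (g i / q i)) :
    klInfo p q = klInfo p g + klInfo g q := by
  rw [klInfo, klInfo, klInfo, ← hcross, ← sum_add_distrib]
  refine sum_congr rfl fun i _ ↦ ?_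
  rw [← mul_add, ← log_mul (div_pos (hp i) (hg i)).ne' (div_pos (hg i) (hq i)).ne',
    div_mul_div_cancel₀ (hg i).ne']

lemma sum_mul_eq_sum_mul_of_affine {p g U f : ι → ℝ} {a c : ℝ} (hf : ∀ i, f i = a * U i + c)
    (hsum : ∑ i, p i = ∑ i, g i) (hmean : ∑ i, p i * U i = ∑ i, g i * U i) :
    ∑ i, p i * f i = ∑ i, g i * f i := by
  simp only [hf, mul_add, sum_add_distrib, mul_left_comm _ a, ← mul_sum, ← sum_mul, hsum, hmean]

end KullbackLeibler

section Gibbs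

variable {ι : Type*} [Fintype ι] (q U : ι → ℝ) (β : ℝ)

noncomputable def partitionFn : ℝ := ∑ j, q j * exp (β * U j)

noncomputable def gibbs (i : ι) : ℝ := q i * exp (β * U i) / partitionFn q U β

variable {q}

lemma partitionFn_pos [Nonempty ι] (hq : ∀ i, 0 < q i) : 0 < partitionFn q U β :=
  sum_pos (fun i _ ↦ mul_pos (hq i) (exp_pos _)) univ_nonempty

lemma gibbs_pos [Nonempty ι] (hq : ∀ i, 0 < q i) (i : ι) : 0 < gibbs q U β i :=
  div_pos (mul_pos (hq i) (exp_pos _)) (partitionFn_pos U β hq)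

lemma sum_gibbs [Nonempty ι] (hq : ∀ i, 0 < q i) : ∑ i, gibbs q U β i = 1 := by
  simp only [gibbs, ← sum_div]
  exact div_self (partitionFn_pos U β hq).ne'

lemma log_gibbs_div [Nonempty ι] (hq : ∀ i, 0 < q i) (i : ι) :
    log (gibbs q U β i / q i) = β * U i + -log (partitionFn q U β) := by
  rw [gibbs, div_right_comm, mul_div_cancel_left₀ _ (hq i).ne',
    log_div (exp_ne_zero _) (partitionFn_pos U β hq).ne', log_exp, sub_eq_add_neg]

end Gibbs

theorem gibbs_minimizes_KL_general (N : ℕ)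
    (q : Fin N → ℝ) (hq : ∀ i, 0 < q i)
    (U : Fin N → ℝ) (β : ℝ)
    (g : Fin N → ℝ)
    (hg : g = fun i => q i * exp (β * U i) / ∑ j, q j * exp (β * U j))
    (p : Fin N → ℝ) (hp : ∀ i, 0 < p i) (hpsum : ∑ i, p i = 1)
    (hmean : ∑ i, p i * U i = ∑ i, g i * U i) :
    ∑ i, g i * log (g i / q i) ≤ ∑ i, p i * log (p i / q i) ∧
      (∑ i, p i * log (p i / q i) = ∑ i, g i * log (g i / q i) ↔ p = g) := by
  have : Nonempty (Fin N) :=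
    univ_nonempty_iff.mp (nonempty_of_sum_ne_zero (hpsum ▸ one_ne_zero))
  replace hg : g = gibbs q U β := hg
  subst hg
  have hg_pos := gibbs_pos U β hq
  have hsum : ∑ i, p i = ∑ i, gibbs q U β i := by rw [hpsum, sum_gibbs U β hq]
  have hdecomp : klInfo p q = klInfo p (gibbs q U β) + klInfo (gibbs q U β) q :=
    klInfo_eq_klInfo_add_klInfo hp hg_pos hq
      (sum_mul_eq_sum_mul_of_affine (log_gibbs_div U β hq) hsum hmean)
  have hnonneg := klInfo_nonneg (fun i ↦ (hp i).le) hg_pos hsum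
  have hzero := klInfo_eq_zero_iff (fun i ↦ (hp i).le) hg_pos hsum
  change klInfo _ q ≤ klInfo p q ∧ (klInfo p q = klInfo _ q ↔ _)
  rw [hdecomp, ← hzero]
  exact ⟨le_add_of_nonneg_left hnonneg, add_eq_right⟩

/-- Theorem 2 (St. Petersburg paper): the Gibbs distribution
`g i = q i * exp (β * U i) / ∑ j, q j * exp (β * U j)` minimizes the
Kullback–Leibler information `∑ i, p i * log (p i / q i)` among all
distributions `p` with the same mean utility, with equality iff `p = g`. -/
theorem gibbs_minimizes_KL (N : ℕ) (hN : 1 ≤ N)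
    (q : Fin N → ℝ) (hq : ∀ i, 0 < q i) (hqsum : ∑ i, q i = 1)
    (U : Fin N → ℝ) (β : ℝ)
    (g : Fin N → ℝ)
    (hg : g = fun i => q i * exp (β * U i) / ∑ j, q j * exp (β * U j))
    (p : Fin N → ℝ) (hp : ∀ i, 0 < p i) (hpsum : ∑ i, p i = 1)
    (hmean : ∑ i, p i * U i = ∑ i, g i * U i) :
    ∑ i, g i * log (g i / q i) ≤ ∑ i, p i * log (p i / q i) ∧
      (∑ i, p i * log (p i / q i) = ∑ i, g i * log (g i / q i) ↔ p = g) :=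
  gibbs_minimizes_KL_general N q hq U β g hg p hp hpsum hmean
end

section
/- The equation √2·x·sinh(x/2) = 1 has exactly one solution x > 0, and this solution lies in the open interval (1.15, 1.16). -/
/-!
The map `x ↦ √2 · x · sinh (x / 2)` is continuous and strictly increasing on `(0, ∞)`, so it takes
the value `1` at most once there. Taylor bounds on `exp` at `0.575` and `0.58` show that it is
below `1` at `1.15` and above `1` at `1.16`; the intermediate value theorem then places the unique
root between them.
-/

open Real Set

namespace Real

lemma sinh_le_of_exp_le {x t : ℝ} (ht : 0 < t) (h : exp x ≤ t) : sinh x ≤ (t - t⁻¹) / 2 := by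
  rw [← sinh_log ht]
  exact sinh_le_sinh.2 ((le_log_iff_exp_le ht).2 h)

lemma le_sinh_of_le_exp {x t : ℝ} (ht : 0 < t) (h : t ≤ exp x) : (t - t⁻¹) / 2 ≤ sinh x := by
  rw [← sinh_log ht]
  exact sinh_le_sinh.2 ((log_le_iff_le_exp ht).2 h)

lemma strictMonoOn_mul_sinh_div_two {c : ℝ} (hc : 0 < c) :
    StrictMonoOn (fun x => c * x * sinh (x / 2)) (Ici 0) := by
  intro x hx y _ hxy
  have hsinh : sinh (x / 2) < sinh (y / 2) := sinh_lt_sinh.2 (by linarith)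
  have hsinh_nonneg : 0 ≤ sinh (x / 2) := sinh_nonneg_iff.2 (by linarith [mem_Ici.1 hx])
  exact mul_lt_mul'' (mul_lt_mul_of_pos_left hxy hc) hsinh (mul_nonneg hc.le hx) hsinh_nonneg

end Real

section RootLocation

variable {f : ℝ → ℝ} {s : Set ℝ} {a b c : ℝ}

lemma StrictMonoOn.mem_Ioo_of_eq (hf : StrictMonoOn f s) (ha : a ∈ s) (hb : b ∈ s)
    (hfa : f a < c) (hfb : c < f b) {x : ℝ} (hx : x ∈ s) (hfx : f x = c) : x ∈ Ioo a b :=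
  ⟨(hf.lt_iff_lt ha hx).1 (hfx ▸ hfa), (hf.lt_iff_lt hx hb).1 (hfx ▸ hfb)⟩

lemma StrictMonoOn.existsUnique_eq (hf : StrictMonoOn f s) (hcont : ContinuousOn f s)
    [hs : s.OrdConnected] (ha : a ∈ s) (hb : b ∈ s) (hfa : f a < c) (hfb : c < f b) :
    ∃! x, x ∈ s ∧ f x = c := by
  have hab : a ≤ b := ((hf.lt_iff_lt ha hb).1 (hfa.trans hfb)).le
  obtain ⟨x, hx, hfx⟩ :=
    intermediate_value_Ioo hab (hcont.mono (hs.out ha hb)) ⟨hfa, hfb⟩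
  have hxs : x ∈ s := hs.out ha hb (Ioo_subset_Icc_self hx)
  exact ⟨x, ⟨hxs, hfx⟩, fun y ⟨hys, hfy⟩ => hf.injOn hys hxs (hfy.trans hfx.symm)⟩

end RootLocation

lemma sqrt_two_mem_Ioo : √2 ∈ Ioo (1.41421 : ℝ) 1.41422 :=
  ⟨(lt_sqrt (by norm_num)).2 (by norm_num), (sqrt_lt' (by norm_num)).2 (by norm_num)⟩

lemma sqrt_two_mul_sinh_lt_one : √2 * 1.15 * sinh (1.15 / 2) < 1 := by
  have hexp : exp (1.15 / 2) ≤ 1.778 := by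
    refine (exp_bound' (by norm_num) (by norm_num) (n := 5) (by norm_num)).trans ?_
    norm_num [Finset.sum_range_succ, Nat.factorial]
  have hsinh := sinh_le_of_exp_le (by norm_num) hexp
  have hsinh_nonneg : 0 ≤ sinh (1.15 / 2) := sinh_nonneg_iff.2 (by norm_num)
  nlinarith [sqrt_two_mem_Ioo.2]

lemma one_lt_sqrt_two_mul_sinh : 1 < √2 * 1.16 * sinh (1.16 / 2) := by
  have hexp : 1.786 ≤ exp (1.16 / 2) := by
    refine le_trans ?_ (sum_le_exp_of_nonneg (by norm_num) 7)
    norm_num [Finset.sum_range_succ, Nat.factorial]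
  have hsinh := le_sinh_of_le_exp (by norm_num) hexp
  nlinarith [sqrt_two_mem_Ioo.1]

/-- The disbelief-parameter equation `√2 · x · sinh (x/2) = 1` has exactly one
positive solution, and this solution lies in the interval `(1.15, 1.16)`. -/
theorem disbelief_equation_unique_root :
    (∃! x : ℝ, 0 < x ∧ Real.sqrt 2 * x * sinh (x / 2) = 1) ∧
    ∀ x : ℝ, 0 < x → Real.sqrt 2 * x * sinh (x / 2) = 1 →
      1.15 < x ∧ x < 1.16 := by
  have hmono : StrictMonoOn (fun x => √2 * x * sinh (x / 2)) (Ioi 0) :=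
    (strictMonoOn_mul_sinh_div_two (by positivity)).mono Ioi_subset_Ici_self
  have hcont : ContinuousOn (fun x => √2 * x * sinh (x / 2)) (Ioi 0) := by fun_prop
  have h115 : (1.15 : ℝ) ∈ Ioi 0 := by norm_num
  have h116 : (1.16 : ℝ) ∈ Ioi 0 := by norm_num
  exact ⟨hmono.existsUnique_eq hcont h115 h116 sqrt_two_mul_sinh_lt_one one_lt_sqrt_two_mul_sinh,
    fun x hx hfx => hmono.mem_Ioo_of_eq h115 h116 sqrt_two_mul_sinh_lt_one
      one_lt_sqrt_two_mul_sinh hx hfx⟩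
end

section
/- Let b > 0. Then there exists a unique x > 0 satisfying (1 + x)·ln(1 + x) = 1/b, and this x is the strict global maximizer of g(x) = ln(1 + x)·exp(−b·x) over (0, ∞): for every y > 0 with y ≠ x, ln(1 + y)·exp(−b·y) < ln(1 + x)·exp(−b·x). -/
/-!
Write `F y = (1 + y) log (1 + y)`. Since `u ↦ u log u` is continuous and strictly increasing on
`[1, ∞)`, `F` increases strictly from `F 0 = 0` to `∞`, so `F x = 1 / b` has exactly one positive
solution. The derivative of `g y = log (1 + y) e^{-b y}` is `(1 - b F y) e^{-b y} / (1 + y)`, which is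
positive before that solution and negative after it, so `g` attains its strict maximum there.
-/

open Real Set

theorem apply_lt_apply_of_deriv_pos_of_deriv_neg {f : ℝ → ℝ} {a x y : ℝ}
    (hf : ContinuousOn f (Ici a)) (hpos : ∀ t ∈ Ioo a x, 0 < deriv f t)
    (hneg : ∀ t ∈ Ioi x, deriv f t < 0) (hx : a ≤ x) (hy : a ≤ y) (hyx : y ≠ x) :
    f y < f x := by
  rcases hyx.lt_or_gt with hlt | hgt
  · have hmono : StrictMonoOn f (Icc a x) :=
      strictMonoOn_of_deriv_pos (convex_Icc a x) (hf.mono Icc_subset_Ici_self)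
        (by rwa [interior_Icc])
    exact hmono ⟨hy, hlt.le⟩ ⟨hx, le_rfl⟩ hlt
  · have hanti : StrictAntiOn f (Ici x) :=
      strictAntiOn_of_deriv_neg (convex_Ici x) (hf.mono (Ici_subset_Ici.2 hx))
        (by rwa [interior_Ici])
    exact hanti self_mem_Ici hgt.le hgt

namespace Real

theorem exists_one_lt_mul_log_eq {c : ℝ} (hc : 0 < c) : ∃ u, 1 < u ∧ u * log u = c := by
  have hmem : c ∈ Icc (1 * log 1) (exp c * log (exp c)) := by
    rw [log_one, log_exp]
    exact ⟨by simpa using hc.le, le_mul_of_one_le_left hc.le (one_le_exp hc.le)⟩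
  obtain ⟨u, hu, hu_eq⟩ :=
    intermediate_value_Icc (one_le_exp hc.le) continuous_mul_log.continuousOn hmem
  refine ⟨u, hu.1.lt_of_ne ?_, hu_eq⟩
  rintro rfl
  simp [hc.ne] at hu_eq

theorem strictMonoOn_one_add_mul_log_one_add :
    StrictMonoOn (fun y : ℝ ↦ (1 + y) * log (1 + y)) (Ici 0) :=
  mul_log_strictMonoOn.comp (fun _ _ _ _ h ↦ (add_lt_add_iff_left 1).2 h) fun y (hy : 0 ≤ y) ↦
    show exp (-1) ≤ 1 + y by linarith [exp_neg_one_lt_half]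

theorem continuousOn_log_one_add_mul_exp (b : ℝ) :
    ContinuousOn (fun y ↦ log (1 + y) * exp (-b * y)) (Ici 0) :=
  ((by fun_prop : Continuous fun y : ℝ ↦ 1 + y).continuousOn.log
    fun y (hy : 0 ≤ y) ↦ by linarith).mul (by fun_prop)

theorem hasDerivAt_log_one_add_mul_exp (b : ℝ) {t : ℝ} (ht : 0 < 1 + t) :
    HasDerivAt (fun y ↦ log (1 + y) * exp (-b * y))
      ((1 - b * ((1 + t) * log (1 + t))) / (1 + t) * exp (-b * t)) t := by
  have hlog : HasDerivAt (fun y ↦ log (1 + y)) (1 / (1 + t)) t := by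
    simpa using ((hasDerivAt_id t).const_add 1).log ht.ne'
  have hexp : HasDerivAt (fun y ↦ exp (-b * y)) (exp (-b * t) * -b) t := by
    simpa using ((hasDerivAt_id t).const_mul (-b)).exp
  refine (hlog.fun_mul hexp).congr_deriv ?_
  field_simp
  ring

theorem deriv_log_one_add_mul_exp_pos_iff {b t : ℝ} (hb : 0 < b) (ht : 0 < 1 + t) :
    0 < deriv (fun y ↦ log (1 + y) * exp (-b * y)) t ↔ (1 + t) * log (1 + t) < 1 / b := by
  rw [(hasDerivAt_log_one_add_mul_exp b ht).deriv, mul_pos_iff_of_pos_right (exp_pos _),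
    div_pos_iff_of_pos_right ht, sub_pos, lt_div_iff₀ hb, mul_comm]

theorem deriv_log_one_add_mul_exp_neg_iff {b t : ℝ} (hb : 0 < b) (ht : 0 < 1 + t) :
    deriv (fun y ↦ log (1 + y) * exp (-b * y)) t < 0 ↔ 1 / b < (1 + t) * log (1 + t) := by
  rw [(hasDerivAt_log_one_add_mul_exp b ht).deriv, ← neg_pos, ← neg_mul, ← neg_div, neg_sub,
    mul_pos_iff_of_pos_right (exp_pos _), div_pos_iff_of_pos_right ht, sub_pos, div_lt_iff₀ hb,
    mul_comm]

end Real

/-- Logarithmic prior (St. Petersburg paper, Sec. 8): for `b > 0`, the equation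
`(1 + x) ln (1 + x) = 1/b` has a unique positive solution, which is the strict
global maximizer of `g(x) = ln(1 + x) e^{-b x}` on `(0, ∞)`. -/
theorem log_prior_optimum (b : ℝ) (hb : 0 < b) :
    (∃! x : ℝ, 0 < x ∧ (1 + x) * log (1 + x) = 1 / b) ∧
    ∀ x : ℝ, 0 < x → (1 + x) * log (1 + x) = 1 / b →
      ∀ y : ℝ, 0 < y → y ≠ x →
        log (1 + y) * exp (-b * y) < log (1 + x) * exp (-b * x) := by
  have hF := strictMonoOn_one_add_mul_log_one_add
  refine ⟨?_, fun x hx hFx y hy hyx ↦ ?_⟩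
  · obtain ⟨u, hu, hu_eq⟩ := exists_one_lt_mul_log_eq (one_div_pos.2 hb)
    have hFu : (1 + (u - 1)) * log (1 + (u - 1)) = 1 / b := by rwa [add_sub_cancel]
    exact ⟨u - 1, ⟨by linarith, hFu⟩, fun y hy ↦
      hF.injOn hy.1.le (show (0 : ℝ) ≤ u - 1 by linarith) (hy.2.trans hFu.symm)⟩
  refine apply_lt_apply_of_deriv_pos_of_deriv_neg (continuousOn_log_one_add_mul_exp b)
    (fun t ht ↦ ?_) (fun t ht ↦ ?_) hx.le hy.le hyx
  · rw [deriv_log_one_add_mul_exp_pos_iff hb (by linarith [ht.1]), ← hFx]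
    exact hF ht.1.le hx.le ht.2
  · rw [deriv_log_one_add_mul_exp_neg_iff hb (by linarith [mem_Ioi.1 ht]), ← hFx]
    exact hF hx.le (hx.trans ht).le ht
end
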